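/- Taylor–Foguel theorem: For a Banach space X, every closed subspace Y of X has property U in X (every functional on Y has a unique norm-preserving extension to X) if and only if the dual space X* is strictly convex. -/

import Mathlib

/-!
Hahn–Banach always provides a norm-preserving extension, so property U is about uniqueness.
If `X*` is strictly convex and `f ≠ f'` both extend `g` with norm `‖g‖`, their midpoint still
extends `g`, so `‖f + f'‖ = 2‖g‖`, which strict convexity forbids. Conversely, if `f ≠ g` lie on
the unit sphere of `X*` with `‖f + g‖ = 2`, they agree on the closed hyperplane `Y = ker (f - g)`.
Every extension of `f|_Y` is an affine combination of `f` and `g`, and a functional norming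
`f + g` equals `1` on all of those, so `‖f|_Y‖ = 1` and `f`, `g` are two norm-preserving
extensions of it.
-/

open NormedSpace

theorem one_le_norm_smul_add_smul_of_norm_add_eq_two {E : Type*} [SeminormedAddCommGroup E]
    [NormedSpace ℝ E] {x y : E} (hx : ‖x‖ ≤ 1) (hy : ‖y‖ ≤ 1) (hxy : ‖x + y‖ = 2)
    {a b : ℝ} (hab : a + b = 1) : 1 ≤ ‖a • x + b • y‖ := by
  obtain ⟨Λ, hΛ, hΛxy⟩ := exists_dual_vector'' ℝ (x + y)
  have bound : ∀ z : E, Λ z ≤ ‖z‖ := fun z =>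
    (le_abs_self _).trans <| (Λ.le_opNorm z).trans <| mul_le_of_le_one_left (norm_nonneg z) hΛ
  rw [map_add, hxy] at hΛxy
  norm_num at hΛxy
  have hΛx : Λ x = 1 := by linarith [bound x, bound y]
  have hΛy : Λ y = 1 := by linarith [bound x, bound y]
  calc 1 = Λ (a • x + b • y) := by simp [hΛx, hΛy, hab]
    _ ≤ ‖a • x + b • y‖ := bound _

theorem ContinuousLinearMap.exists_eq_smul_of_ker_le {𝕜 E : Type*} [NormedField 𝕜]
    [SeminormedAddCommGroup E] [NormedSpace 𝕜 E] {φ ψ : StrongDual 𝕜 E}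
    (h : LinearMap.ker (ψ : E →ₗ[𝕜] 𝕜) ≤ LinearMap.ker (φ : E →ₗ[𝕜] 𝕜)) : ∃ c : 𝕜, φ = c • ψ := by
  have hspan := mem_span_of_iInf_ker_le_ker (L := fun _ : Unit => (ψ : E →ₗ[𝕜] 𝕜))
    (K := (φ : E →ₗ[𝕜] 𝕜)) (by simpa using h)
  rw [Set.range_const, Submodule.mem_span_singleton] at hspan
  obtain ⟨c, hc⟩ := hspan
  exact ⟨c, ContinuousLinearMap.ext fun x => (LinearMap.congr_fun hc x).symm⟩

theorem ContinuousLinearMap.norm_comp_subtypeL_le {𝕜 E : Type*} [NontriviallyNormedField 𝕜]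
    [SeminormedAddCommGroup E] [NormedSpace 𝕜 E] (f : StrongDual 𝕜 E) (Y : Submodule 𝕜 E) :
    ‖f.comp Y.subtypeL‖ ≤ ‖f‖ :=
  (f.opNorm_comp_le _).trans <| mul_le_of_le_one_right (norm_nonneg f) Y.norm_subtypeL_le

theorem norm_comp_subtypeL_ker_sub_eq_one {E : Type*} [NormedAddCommGroup E] [NormedSpace ℝ E]
    {f g : StrongDual ℝ E} (hf : ‖f‖ = 1) (hg : ‖g‖ = 1) (hfg : ‖f + g‖ = 2) :
    ‖f.comp (LinearMap.ker ((f - g : StrongDual ℝ E) : E →ₗ[ℝ] ℝ)).subtypeL‖ = 1 := by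
  set Y := LinearMap.ker ((f - g : StrongDual ℝ E) : E →ₗ[ℝ] ℝ)
  refine le_antisymm (hf ▸ f.norm_comp_subtypeL_le Y) ?_
  obtain ⟨F, hFf, hF⟩ := exists_extension_norm_eq Y (f.comp Y.subtypeL)
  obtain ⟨c, hc⟩ : ∃ c : ℝ, F - f = c • (f - g) :=
    ContinuousLinearMap.exists_eq_smul_of_ker_le fun x hx => by
      simpa [sub_eq_zero] using hFf ⟨x, hx⟩
  have hF_combo : F = (1 + c) • f + (-c) • g := by
    rw [← sub_add_cancel F f, hc]; module
  rw [← hF, hF_combo]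
  exact one_le_norm_smul_add_smul_of_norm_add_eq_two hf.le hg.le hfg (by ring)

theorem eq_of_extends_of_norm_eq {E : Type*} [NormedAddCommGroup E] [NormedSpace ℝ E]
    [StrictConvexSpace ℝ (StrongDual ℝ E)] {Y : Submodule ℝ E} {g : StrongDual ℝ Y}
    {f f' : StrongDual ℝ E} (hf : ∀ y : Y, f y = g y) (hf' : ∀ y : Y, f' y = g y)
    (hnf : ‖f‖ = ‖g‖) (hnf' : ‖f'‖ = ‖g‖) : f = f' := by
  refine eq_of_norm_eq_of_norm_add_eq (hnf.trans hnf'.symm) (le_antisymm (norm_add_le f f') ?_)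
  have hmid : ((2 : ℝ)⁻¹ • (f + f')).comp Y.subtypeL = g := by
    ext y; simp [hf y, hf' y]; ring
  have := ((2 : ℝ)⁻¹ • (f + f')).norm_comp_subtypeL_le Y
  rw [hmid, norm_smul] at this
  norm_num at this
  linarith

theorem taylor_foguel_general {X : Type*} [NormedAddCommGroup X] [NormedSpace ℝ X] :
    (∀ Y : Subspace ℝ X, IsClosed (Y : Set X) →
      ∀ g : StrongDual ℝ Y, ∃! f : StrongDual ℝ X, (∀ y : Y, f (y : X) = g y) ∧ ‖f‖ = ‖g‖) ↔
    StrictConvexSpace ℝ (StrongDual ℝ X) := by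
  constructor
  · intro hU
    refine StrictConvexSpace.of_norm_add_ne_two fun f g hf hg hne hfg => hne ?_
    set Y := LinearMap.ker ((f - g : StrongDual ℝ X) : X →ₗ[ℝ] ℝ)
    have hfY : ∀ y : Y, f y = g y := fun y => sub_eq_zero.mp y.2
    have hnorm := norm_comp_subtypeL_ker_sub_eq_one hf hg hfg
    obtain ⟨F, -, huniq⟩ := hU Y (f - g).isClosed_ker (f.comp Y.subtypeL)
    exact (huniq f ⟨fun _ => rfl, hf.trans hnorm.symm⟩).trans
      (huniq g ⟨fun y => (hfY y).symm, hg.trans hnorm.symm⟩).symm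
  · intro _ Y _ g
    obtain ⟨f, hext, hnorm⟩ := exists_extension_norm_eq Y g
    exact ⟨f, ⟨hext, hnorm⟩, fun f' ⟨hext', hnorm'⟩ =>
      eq_of_extends_of_norm_eq hext' hext hnorm' hnorm⟩

/-- Taylor–Foguel theorem: every closed subspace of `X` has property U in `X` iff `X*`
is strictly convex. -/
theorem taylor_foguel {X : Type*} [NormedAddCommGroup X] [NormedSpace ℝ X]
    [CompleteSpace X] :
    (∀ Y : Subspace ℝ X, IsClosed (Y : Set X) →
      ∀ g : StrongDual ℝ Y, ∃! f : StrongDual ℝ X, (∀ y : Y, f (y : X) = g y) ∧ ‖f‖ = ‖g‖) ↔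
    StrictConvexSpace ℝ (StrongDual ℝ X) :=
  taylor_foguel_general
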